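/- (Strict concavity of the approximated log-likelihood, core of Theorem 3.) Fix real numbers v > 0, Δ > 0, an integer m ≥ 1, a constant c ≥ 0, and real numbers u_1, …, u_m with 0 < u_i ≤ v²·Δ² for each i. Then the function ℓ(λ) = −λ·c + ∑_{i=1}^{m} log( λ·I_0((λ/v)·√u_i) + (λ·v·Δ/√u_i)·I_1((λ/v)·√u_i) ), defined for λ > 0, is twice differentiable on (0, ∞) with ℓ''(λ) < 0 for all λ > 0; i.e., ℓ is strictly concave on (0, ∞). -/

import Mathlib

/-!
Write the `i`-th summand as `log G(λ)` with `G(λ) = λ I₀(aλ) + bλ I₁(aλ)` (`likTerm a b`),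
where `a = √uᵢ / v > 0` and `b = vΔ / √uᵢ ≥ 1`. The recurrences `I₀' = I₁` and `(x I₁)' = x I₀`
give, with `z = aλ`, `G'² - G G'' = I₀(z)² + b I₀(z) I₁(z) + (b + (b² - 1) z) W(z)`, where
`W(z) = z (I₀² - I₁²) - I₀ I₁`. Since `W(0) = 0` and `W'(z) = I₀ I₁ / z > 0`, `W` is positive
on `(0, ∞)`, so every `log G` has negative second derivative; the term `-λc` is linear.
-/

/-- The modified Bessel function of the first kind of integer order `ν`,
defined by its power series. -/
noncomputable def besselI (ν : ℕ) (x : ℝ) : ℝ :=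
  ∑' k : ℕ, (x / 2) ^ (2 * k + ν) / ((Nat.factorial k : ℝ) * Nat.factorial (k + ν))

open Real Nat

section HalfPowerSeries

variable {c : ℕ → ℝ} {C : ℝ}

lemma nat_div_two_mul_half_pow_pred_le {R : ℝ} (hR : 1 ≤ R) (n : ℕ) :
    (n : ℝ) / 2 * (R / 2) ^ (n - 1) ≤ R ^ n := by
  rcases n with _ | n
  · simp
  have hn : ((n + 1 : ℕ) : ℝ) ≤ 2 ^ (n + 1) := by exact_mod_cast Nat.lt_two_pow_self.le
  calc ((n + 1 : ℕ) : ℝ) / 2 * (R / 2) ^ (n + 1 - 1) = ((n + 1 : ℕ) : ℝ) / 2 ^ (n + 1) * R ^ n := by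
        rw [Nat.add_sub_cancel, div_pow]; ring
    _ ≤ 1 * R ^ n := by gcongr; exact (div_le_one (by positivity)).mpr hn
    _ ≤ R ^ (n + 1) := by rw [one_mul]; exact pow_le_pow_right₀ hR n.le_succ

lemma norm_mul_le_of_abs_le_pow (hc : ∀ k, |c k| ≤ C / k !) (ν : ℕ) {R t : ℝ} {k : ℕ}
    (ht : |t| ≤ R ^ (2 * k + ν)) :
    ‖c k * t‖ ≤ C * R ^ ν * ((R ^ 2) ^ k / k !) := by
  calc ‖c k * t‖ = |c k| * |t| := by rw [norm_mul, norm_eq_abs, norm_eq_abs]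
    _ ≤ C / k ! * R ^ (2 * k + ν) :=
        mul_le_mul (hc k) ht (abs_nonneg _) ((abs_nonneg _).trans (hc k))
    _ = C * R ^ ν * ((R ^ 2) ^ k / k !) := by rw [pow_add, pow_mul]; ring

lemma summable_mul_half_pow (hc : ∀ k, |c k| ≤ C / k !) (ν : ℕ) (x : ℝ) :
    Summable fun k => c k * (x / 2) ^ (2 * k + ν) := by
  have hR : |x / 2| ≤ |x| + 1 := by rw [abs_div, abs_two]; linarith [abs_nonneg x]
  refine ((summable_pow_div_factorial ((|x| + 1) ^ 2)).mul_left _).of_norm_bounded fun k =>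
    norm_mul_le_of_abs_le_pow hc ν ?_
  rw [abs_pow]
  exact pow_le_pow_left₀ (abs_nonneg _) hR _

lemma hasDerivAt_tsum_mul_half_pow (hc : ∀ k, |c k| ≤ C / k !) (ν : ℕ) (x : ℝ) :
    HasDerivAt (fun y => ∑' k, c k * (y / 2) ^ (2 * k + ν))
      (∑' k, c k * ((2 * k + ν : ℕ) / 2 * (x / 2) ^ (2 * k + ν - 1))) x := by
  obtain ⟨R, hR, hx⟩ : ∃ R : ℝ, 1 ≤ R ∧ x ∈ Metric.ball 0 R :=
    ⟨|x| + 1, by linarith [abs_nonneg x], by simp⟩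
  refine hasDerivAt_tsum_of_isPreconnected (g := fun k y => c k * (y / 2) ^ (2 * k + ν))
    (g' := fun k y => c k * ((2 * k + ν : ℕ) / 2 * (y / 2) ^ (2 * k + ν - 1)))
    ((summable_pow_div_factorial (R ^ 2)).mul_left (C * R ^ ν))
    Metric.isOpen_ball (convex_ball 0 R).isPreconnected (fun k y _ => ?_) (fun k y hy => ?_)
    hx (summable_mul_half_pow hc ν x) hx
  · exact ((((hasDerivAt_id' y).div_const 2).fun_pow _).const_mul (c k)).congr_deriv (by ring)
  · refine norm_mul_le_of_abs_le_pow hc ν ?_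
    have hy : |y / 2| ≤ R / 2 := by
      rw [abs_div, abs_two]; gcongr; simpa using (Metric.mem_ball.mp hy).le
    calc |((2 * k + ν : ℕ) : ℝ) / 2 * (y / 2) ^ (2 * k + ν - 1)|
        = ((2 * k + ν : ℕ) : ℝ) / 2 * |y / 2| ^ (2 * k + ν - 1) := by
          rw [abs_mul, abs_pow, abs_of_nonneg (by positivity)]
      _ ≤ ((2 * k + ν : ℕ) : ℝ) / 2 * (R / 2) ^ (2 * k + ν - 1) := by gcongr
      _ ≤ R ^ (2 * k + ν) := nat_div_two_mul_half_pow_pred_le hR _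

end HalfPowerSeries

lemma besselI_eq_tsum (ν : ℕ) (x : ℝ) :
    besselI ν x = ∑' k, ((k ! : ℝ) * (k + ν)!)⁻¹ * (x / 2) ^ (2 * k + ν) :=
  tsum_congr fun _ => div_eq_inv_mul _ _

lemma abs_inv_factorial_mul_factorial_le (ν k : ℕ) : |((k ! : ℝ) * (k + ν)!)⁻¹| ≤ 1 / k ! := by
  rw [abs_of_nonneg (by positivity), ← one_div]
  gcongr
  exact le_mul_of_one_le_right (by positivity) (mod_cast (k + ν).factorial_pos)

lemma summable_besselI (ν : ℕ) (x : ℝ) :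
    Summable fun k : ℕ => (x / 2) ^ (2 * k + ν) / ((k ! : ℝ) * (k + ν)!) := by
  simpa only [div_eq_inv_mul] using
    summable_mul_half_pow (abs_inv_factorial_mul_factorial_le ν) ν x

lemma differentiable_besselI (ν : ℕ) : Differentiable ℝ (besselI ν) := fun x => by
  simpa only [← besselI_eq_tsum] using
    (hasDerivAt_tsum_mul_half_pow (abs_inv_factorial_mul_factorial_le ν) ν x).differentiableAt

lemma hasDerivAt_besselI_zero (x : ℝ) : HasDerivAt (besselI 0) (besselI 1 x) x := by
  have h := hasDerivAt_tsum_mul_half_pow (abs_inv_factorial_mul_factorial_le 0) 0 x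
  simp only [← besselI_eq_tsum] at h
  convert h using 1
  -- the `k = 0` term of the differentiated series vanishes, and the shifted series is that of `I₁`
  have hterm (k : ℕ) : (((k + 1)! : ℝ) * (k + 1 + 0)!)⁻¹ *
      ((2 * (k + 1) + 0 : ℕ) / 2 * (x / 2) ^ (2 * (k + 1) + 0 - 1))
      = (x / 2) ^ (2 * k + 1) / ((k ! : ℝ) * (k + 1)!) := by
    rw [show 2 * (k + 1) + 0 - 1 = 2 * k + 1 by omega, Nat.factorial_succ]
    push_cast
    field_simp
    ring
  rw [tsum_eq_zero_add' ((summable_besselI 1 x).congr fun k => (hterm k).symm)]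
  simp only [hterm]
  simp [besselI]

lemma hasDerivAt_mul_besselI_one (x : ℝ) :
    HasDerivAt (fun y => y * besselI 1 y) (x * besselI 0 x) x := by
  have hc (k : ℕ) : |2 * ((k ! : ℝ) * (k + 1)!)⁻¹| ≤ 2 / k ! := by
    rw [abs_mul, abs_two, ← mul_one_div]
    gcongr
    exact abs_inv_factorial_mul_factorial_le 1 k
  -- `x I₁(x) = ∑ 2 (x/2)^(2k+2) / (k! (k+1)!)`
  convert hasDerivAt_tsum_mul_half_pow hc 2 x using 1
  · funext y
    rw [besselI, ← tsum_mul_left]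
    refine tsum_congr fun k => ?_
    field_simp
    rw [pow_add]
    ring
  · rw [besselI, ← tsum_mul_left]
    refine tsum_congr fun k => ?_
    rw [show 2 * k + 2 - 1 = 2 * k + 1 by omega, Nat.add_zero, Nat.add_zero, pow_succ,
      Nat.factorial_succ]
    push_cast
    field_simp

lemma one_le_besselI_zero (x : ℝ) : 1 ≤ besselI 0 x := by
  have hterm (k : ℕ) : 0 ≤ (x / 2) ^ (2 * k + 0) / ((k ! : ℝ) * (k + 0)!) := by
    rw [Nat.add_zero, pow_mul]; positivity
  rw [besselI]
  simpa using (summable_besselI 0 x).le_tsum 0 fun k _ => hterm k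

lemma besselI_one_pos {x : ℝ} (hx : 0 < x) : 0 < besselI 1 x := by
  have h0 : 0 < (x / 2) ^ (2 * 0 + 1) / ((0 ! : ℝ) * (0 + 1)!) := by simpa using hx
  exact h0.trans_le ((summable_besselI 1 x).le_tsum 0 fun k _ => by positivity)

lemma besselI_one_zero : besselI 1 0 = 0 := by
  simp [besselI]

lemma hasDerivAt_besselI_one {x : ℝ} (hx : x ≠ 0) :
    HasDerivAt (besselI 1) (besselI 0 x - besselI 1 x / x) x := by
  have hquot := (hasDerivAt_mul_besselI_one x).div (hasDerivAt_id' x) hx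
  refine (hquot.congr_of_eventuallyEq ?_).congr_deriv ?_
  · filter_upwards [isOpen_ne.mem_nhds hx] with y hy
    simp only [Pi.div_apply]
    field_simp
  · field_simp

noncomputable def besselW (z : ℝ) : ℝ :=
  z * (besselI 0 z ^ 2 - besselI 1 z ^ 2) - besselI 0 z * besselI 1 z

lemma hasDerivAt_besselW {z : ℝ} (hz : z ≠ 0) :
    HasDerivAt besselW (besselI 0 z * besselI 1 z / z) z := by
  have hI₀ := hasDerivAt_besselI_zero z
  have hI₁ := hasDerivAt_besselI_one hz
  have hsq := (hI₀.fun_pow 2).fun_sub (hI₁.fun_pow 2)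
  refine (((hasDerivAt_id' z).mul hsq).sub (hI₀.mul hI₁)).congr_deriv ?_
  field_simp
  ring

lemma besselW_pos {z : ℝ} (hz : 0 < z) : 0 < besselW z := by
  have hcont : Continuous besselW := by
    have := (differentiable_besselI 0).continuous
    have := (differentiable_besselI 1).continuous
    unfold besselW
    fun_prop
  have hmono : StrictMonoOn besselW (Set.Ici 0) := by
    refine strictMonoOn_of_deriv_pos (convex_Ici 0) hcont.continuousOn fun x hx => ?_
    rw [interior_Ici] at hx
    rw [(hasDerivAt_besselW (ne_of_gt hx)).deriv]
    exact div_pos (mul_pos (one_pos.trans_le (one_le_besselI_zero x)) (besselI_one_pos hx)) hx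
  simpa [besselW, besselI_one_zero] using hmono Set.self_mem_Ici hz.le hz

noncomputable def likTerm (a b l : ℝ) : ℝ :=
  l * besselI 0 (a * l) + b * l * besselI 1 (a * l)

noncomputable def likTerm₁ (a b l : ℝ) : ℝ :=
  besselI 0 (a * l) + a * l * besselI 1 (a * l) + b * (a * l * besselI 0 (a * l))

noncomputable def likTerm₂ (a b l : ℝ) : ℝ :=
  a * (besselI 1 (a * l) + a * l * besselI 0 (a * l)
    + b * (besselI 0 (a * l) + a * l * besselI 1 (a * l)))

lemma hasDerivAt_likTerm {a : ℝ} (ha : a ≠ 0) (b l : ℝ) :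
    HasDerivAt (likTerm a b) (likTerm₁ a b l) l := by
  have hlin := (hasDerivAt_id' l).const_mul a
  have hI₀ := (hasDerivAt_besselI_zero (a * l)).comp l hlin
  have hxI₁ := (hasDerivAt_mul_besselI_one (a * l)).comp l hlin
  have hfun : likTerm a b =
      fun y => y * besselI 0 (a * y) + b / a * (a * y * besselI 1 (a * y)) := by
    funext y
    unfold likTerm
    field_simp
  rw [hfun]
  refine (((hasDerivAt_id' l).fun_mul hI₀).add (hxI₁.const_mul (b / a))).congr_deriv ?_
  simp only [likTerm₁, Function.comp_apply]
  field_simp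

lemma hasDerivAt_likTerm₁ (a b l : ℝ) : HasDerivAt (likTerm₁ a b) (likTerm₂ a b l) l := by
  have hlin := (hasDerivAt_id' l).const_mul a
  have hI₀ := (hasDerivAt_besselI_zero (a * l)).comp l hlin
  have hxI₁ := (hasDerivAt_mul_besselI_one (a * l)).comp l hlin
  have hxI₀ := (((hasDerivAt_id' (a * l)).mul (hasDerivAt_besselI_zero (a * l))).comp l hlin)
  refine ((hI₀.add hxI₁).add (hxI₀.const_mul b)).congr_deriv ?_
  simp only [likTerm₂]
  ring

lemma likTerm_pos {a b l : ℝ} (ha : 0 < a) (hb : 0 ≤ b) (hl : 0 < l) : 0 < likTerm a b l := by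
  have hI₀ := one_le_besselI_zero (a * l)
  have hI₁ := besselI_one_pos (mul_pos ha hl)
  unfold likTerm
  nlinarith [mul_nonneg (mul_nonneg hb hl.le) hI₁.le]

lemma sq_likTerm₁_sub_likTerm_mul_likTerm₂ (a b l : ℝ) :
    likTerm₁ a b l ^ 2 - likTerm a b l * likTerm₂ a b l
      = besselI 0 (a * l) ^ 2 + b * (besselI 0 (a * l) * besselI 1 (a * l))
        + (b + (b ^ 2 - 1) * (a * l)) * besselW (a * l) := by
  unfold likTerm likTerm₁ likTerm₂ besselW
  ring

lemma likTerm_mul_likTerm₂_lt {a b l : ℝ} (ha : 0 < a) (hb : 1 ≤ b) (hl : 0 < l) :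
    likTerm a b l * likTerm₂ a b l < likTerm₁ a b l ^ 2 := by
  have hz : 0 < a * l := mul_pos ha hl
  have hI₀ := one_pos.trans_le (one_le_besselI_zero (a * l))
  have hI₁ := besselI_one_pos hz
  have hcoef : 0 < b + (b ^ 2 - 1) * (a * l) := by
    have : 0 ≤ (b ^ 2 - 1) * (a * l) := mul_nonneg (by nlinarith) hz.le
    linarith
  have := sq_likTerm₁_sub_likTerm_mul_likTerm₂ a b l
  have := mul_pos hcoef (besselW_pos hz)
  nlinarith [mul_pos (one_pos.trans_le hb) (mul_pos hI₀ hI₁)]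

section SumLog

variable {ι : Type*} [Fintype ι] {g g' g'' : ι → ℝ → ℝ} (c : ℝ)

lemma hasDerivAt_neg_mul_add_sum_log {x : ℝ} (hg : ∀ i, HasDerivAt (g i) (g' i x) x)
    (hne : ∀ i, g i x ≠ 0) :
    HasDerivAt (fun y => -y * c + ∑ i, log (g i y)) (-c + ∑ i, g' i x / g i x) x :=
  ((hasDerivAt_id' x).neg.mul_const c).congr_deriv (by ring) |>.add <|
    HasDerivAt.fun_sum fun i _ => (hg i).log (hne i)

lemma hasDerivAt_deriv_neg_mul_add_sum_log {s : Set ℝ} (hs : IsOpen s)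
    (hg : ∀ i, ∀ x ∈ s, HasDerivAt (g i) (g' i x) x)
    (hg' : ∀ i, ∀ x ∈ s, HasDerivAt (g' i) (g'' i x) x)
    (hne : ∀ i, ∀ x ∈ s, g i x ≠ 0) {x : ℝ} (hx : x ∈ s) :
    HasDerivAt (deriv fun y => -y * c + ∑ i, log (g i y))
      (∑ i, (g'' i x * g i x - g' i x * g' i x) / g i x ^ 2) x := by
  have hderiv : deriv (fun y => -y * c + ∑ i, log (g i y)) =ᶠ[nhds x]
      fun y => -c + ∑ i, g' i y / g i y := by
    filter_upwards [hs.mem_nhds hx] with y hy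
    exact (hasDerivAt_neg_mul_add_sum_log c (fun i => hg i y hy) fun i => hne i y hy).deriv
  refine HasDerivAt.congr_of_eventuallyEq ?_ hderiv
  exact ((hasDerivAt_const x (-c)).add (HasDerivAt.fun_sum fun i _ =>
    (hg' i x hx).div (hg i x hx) (hne i x hx))).congr_deriv (zero_add _)

lemma neg_mul_add_sum_log_deriv_deriv_neg [Nonempty ι] {s : Set ℝ} (hs : IsOpen s)
    (hg : ∀ i, ∀ x ∈ s, HasDerivAt (g i) (g' i x) x)
    (hg' : ∀ i, ∀ x ∈ s, HasDerivAt (g' i) (g'' i x) x)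
    (hpos : ∀ i, ∀ x ∈ s, 0 < g i x)
    (hlogConcave : ∀ i, ∀ x ∈ s, g i x * g'' i x < g' i x ^ 2) :
    (∀ x ∈ s, DifferentiableAt ℝ (fun y => -y * c + ∑ i, log (g i y)) x ∧
      DifferentiableAt ℝ (deriv fun y => -y * c + ∑ i, log (g i y)) x) ∧
    ∀ x ∈ s, deriv (deriv fun y => -y * c + ∑ i, log (g i y)) x < 0 := by
  have hne i x hx : g i x ≠ 0 := (hpos i x hx).ne'
  have h2 x (hx : x ∈ s) := hasDerivAt_deriv_neg_mul_add_sum_log c hs hg hg' hne hx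
  refine ⟨fun x hx => ⟨?_, (h2 x hx).differentiableAt⟩, fun x hx => ?_⟩
  · exact (hasDerivAt_neg_mul_add_sum_log c (fun i => hg i x hx) fun i => hne i x hx)
      |>.differentiableAt
  rw [(h2 x hx).deriv]
  refine Finset.sum_neg (fun i _ => div_neg_of_neg_of_pos ?_ (pow_pos (hpos i x hx) 2))
    Finset.univ_nonempty
  nlinarith [hlogConcave i x hx]

end SumLog

theorem logLik_strictly_concave_general (v Δ : ℝ) (hv : 0 < v) (hΔ : 0 < Δ)
    (m : ℕ) (hm : 1 ≤ m) (c : ℝ) (u : Fin m → ℝ)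
    (hu : ∀ i, 0 < u i ∧ u i ≤ v ^ 2 * Δ ^ 2) :
    (∀ lam : ℝ, 0 < lam →
      DifferentiableAt ℝ
        (fun l : ℝ => -l * c + ∑ i : Fin m, Real.log
          (l * besselI 0 ((l / v) * Real.sqrt (u i))
            + (l * v * Δ / Real.sqrt (u i)) *
                besselI 1 ((l / v) * Real.sqrt (u i)))) lam ∧
      DifferentiableAt ℝ
        (deriv (fun l : ℝ => -l * c + ∑ i : Fin m, Real.log
          (l * besselI 0 ((l / v) * Real.sqrt (u i))
            + (l * v * Δ / Real.sqrt (u i)) *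
                besselI 1 ((l / v) * Real.sqrt (u i))))) lam) ∧
    (∀ lam : ℝ, 0 < lam →
      deriv (deriv (fun l : ℝ => -l * c + ∑ i : Fin m, Real.log
        (l * besselI 0 ((l / v) * Real.sqrt (u i))
          + (l * v * Δ / Real.sqrt (u i)) *
              besselI 1 ((l / v) * Real.sqrt (u i))))) lam < 0) := by
  have hsqrt (i : Fin m) : 0 < √(u i) := sqrt_pos.mpr (hu i).1
  have ha (i : Fin m) : 0 < √(u i) / v := div_pos (hsqrt i) hv
  have hb (i : Fin m) : 1 ≤ v * Δ / √(u i) := by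
    rw [one_le_div (hsqrt i), sqrt_le_left (by positivity), mul_pow]
    exact (hu i).2
  have hterm (l : ℝ) (i : Fin m) :
      l * besselI 0 ((l / v) * √(u i)) + (l * v * Δ / √(u i)) * besselI 1 ((l / v) * √(u i))
        = likTerm (√(u i) / v) (v * Δ / √(u i)) l := by
    rw [likTerm, show l / v * √(u i) = √(u i) / v * l by ring]
    ring
  simp only [hterm]
  have : Nonempty (Fin m) := Fin.pos_iff_nonempty.mp hm
  exact neg_mul_add_sum_log_deriv_deriv_neg c isOpen_Ioi
    (fun i l _ => hasDerivAt_likTerm (ha i).ne' _ l) (fun i l _ => hasDerivAt_likTerm₁ _ _ l)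
    (fun i _ hl => likTerm_pos (ha i) (zero_le_one.trans (hb i)) hl)
    (fun i _ hl => likTerm_mul_likTerm₂_lt (ha i) (hb i) hl)

/-- Strict concavity of the approximated log-likelihood, core of Theorem 3. -/
theorem logLik_strictly_concave (v Δ : ℝ) (hv : 0 < v) (hΔ : 0 < Δ)
    (m : ℕ) (hm : 1 ≤ m) (c : ℝ) (hc : 0 ≤ c) (u : Fin m → ℝ)
    (hu : ∀ i, 0 < u i ∧ u i ≤ v ^ 2 * Δ ^ 2) :
    (∀ lam : ℝ, 0 < lam →
      DifferentiableAt ℝ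
        (fun l : ℝ => -l * c + ∑ i : Fin m, Real.log
          (l * besselI 0 ((l / v) * Real.sqrt (u i))
            + (l * v * Δ / Real.sqrt (u i)) *
                besselI 1 ((l / v) * Real.sqrt (u i)))) lam ∧
      DifferentiableAt ℝ
        (deriv (fun l : ℝ => -l * c + ∑ i : Fin m, Real.log
          (l * besselI 0 ((l / v) * Real.sqrt (u i))
            + (l * v * Δ / Real.sqrt (u i)) *
                besselI 1 ((l / v) * Real.sqrt (u i))))) lam) ∧
    (∀ lam : ℝ, 0 < lam →
      deriv (deriv (fun l : ℝ => -l * c + ∑ i : Fin m, Real.log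
        (l * besselI 0 ((l / v) * Real.sqrt (u i))
          + (l * v * Δ / Real.sqrt (u i)) *
              besselI 1 ((l / v) * Real.sqrt (u i))))) lam < 0) :=
  logLik_strictly_concave_general v Δ hv hΔ m hm c u hu
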